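/- Let (F_m)_{m∈ℕ} be a sequence of nondegenerate homogeneous polynomial maps of degree d on ℂ^{k+1} and F₀ a nondegenerate homogeneous polynomial map of degree d such that sup_{‖z‖=1} ‖F_m(z) − F₀(z)‖ → 0. Let (z_m) be a sequence in ℂ^{k+1} \ {0} converging to z₀ ≠ 0. Then G_{F_m}(z_m) → G_{F₀}(z₀). In other words, the Green function (F, z) ↦ G_F(z) is jointly continuous in the map F and the point z. -/

import Mathlib

open Filter Topology

noncomputable section

/-- `F` is a map `ℂ^{k+1} → ℂ^{k+1}` each of whose components is a homogeneous
polynomial of degree `d` in the coordinates. -/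
def IsHomPoly (k d : ℕ)
    (F : EuclideanSpace ℂ (Fin (k + 1)) → EuclideanSpace ℂ (Fin (k + 1))) : Prop :=
  ∀ i : Fin (k + 1), ∃ P : MvPolynomial (Fin (k + 1)) ℂ,
    P.IsHomogeneous d ∧ ∀ z, F z i = MvPolynomial.eval (fun j => z j) P

/-- `F` is nondegenerate: `F z = 0` implies `z = 0`. -/
def IsNondeg (k : ℕ)
    (F : EuclideanSpace ℂ (Fin (k + 1)) → EuclideanSpace ℂ (Fin (k + 1))) : Prop :=
  ∀ z, F z = 0 → z = 0

/-- `G` is the Green function of `F` (of degree `d`): for every `z ≠ 0`,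
`d^{-n} log ‖F^n z‖ → G z`. -/
def IsGreen (k d : ℕ)
    (F : EuclideanSpace ℂ (Fin (k + 1)) → EuclideanSpace ℂ (Fin (k + 1)))
    (G : EuclideanSpace ℂ (Fin (k + 1)) → ℝ) : Prop :=
  ∀ z, z ≠ 0 →
    Tendsto (fun n : ℕ => ((d : ℝ) ^ n)⁻¹ * Real.log ‖F^[n] z‖) atTop (nhds (G z))

lemma eval_hom_mul {k d : ℕ} {P : MvPolynomial (Fin (k + 1)) ℂ} (hP : P.IsHomogeneous d)
    (c : ℂ) (x : Fin (k + 1) → ℂ) :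
    MvPolynomial.eval (fun j => c * x j) P = c ^ d * MvPolynomial.eval x P := by
  rw [MvPolynomial.eval_eq', MvPolynomial.eval_eq', Finset.mul_sum]
  refine Finset.sum_congr rfl fun m hm => ?_
  have hdeg : ∑ i, m i = d := by
    have h1 := hP (MvPolynomial.mem_support_iff.mp hm)
    have h2 : Finsupp.degree m = Finsupp.weight 1 m := by
      rw [Finsupp.degree_eq_weight_one]; rfl
    rw [← h1, ← h2, Finsupp.degree]
    exact (Finset.sum_subset (Finset.subset_univ _)
      (fun i _ hi => Finsupp.notMem_support_iff.mp hi)).symm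
  rw [← hdeg]
  simp only [mul_pow, Finset.prod_mul_distrib, Finset.prod_pow_eq_pow_sum]
  ring

lemma homPoly_smul {k d : ℕ}
    {F : EuclideanSpace ℂ (Fin (k + 1)) → EuclideanSpace ℂ (Fin (k + 1))}
    (hF : IsHomPoly k d F) (c : ℂ) (z : EuclideanSpace ℂ (Fin (k + 1))) :
    F (c • z) = c ^ d • F z := by
  ext i
  obtain ⟨P, hP, hev⟩ := hF i
  have h1 : (fun j => (c • z) j) = fun j => c * z j := rfl
  have h2 : (c ^ d • F z) i = c ^ d * F z i := rfl
  rw [h2, hev, hev, h1, eval_hom_mul hP]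

lemma homPoly_zero {k d : ℕ} (hd : 1 ≤ d)
    {F : EuclideanSpace ℂ (Fin (k + 1)) → EuclideanSpace ℂ (Fin (k + 1))}
    (hF : IsHomPoly k d F) : F 0 = 0 := by
  have h := homPoly_smul hF 0 0
  rw [smul_zero] at h
  rw [h, zero_pow (by omega), zero_smul]

lemma homPoly_continuous {k d : ℕ}
    {F : EuclideanSpace ℂ (Fin (k + 1)) → EuclideanSpace ℂ (Fin (k + 1))}
    (hF : IsHomPoly k d F) : Continuous F := by
  have h1 : Continuous fun (z : EuclideanSpace ℂ (Fin (k + 1))) (i : Fin (k + 1)) => F z i := by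
    refine continuous_pi fun i => ?_
    obtain ⟨P, hP, hev⟩ := hF i
    simp only [hev]
    exact (MvPolynomial.continuous_eval P).comp (PiLp.continuous_ofLp (p := 2) (β := fun _ : Fin (k+1) => ℂ))
  exact (PiLp.continuous_toLp (p := 2) (β := fun _ : Fin (k+1) => ℂ)).comp h1

lemma unit_mem_sphere {k : ℕ} {w : EuclideanSpace ℂ (Fin (k + 1))} (hw : w ≠ 0) :
    ((‖w‖⁻¹ : ℂ)) • w ∈ Metric.sphere (0 : EuclideanSpace ℂ (Fin (k + 1))) 1 := by
  have hn : ‖w‖ ≠ 0 := norm_ne_zero_iff.mpr hw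
  rw [mem_sphere_zero_iff_norm, norm_smul]
  simp [abs_of_nonneg, hn, inv_mul_cancel₀ hn]

lemma smul_unit_eq {k : ℕ} {w : EuclideanSpace ℂ (Fin (k + 1))} (hw : w ≠ 0) :
    ((‖w‖ : ℂ)) • ((‖w‖⁻¹ : ℂ) • w) = w := by
  have hn : (‖w‖ : ℂ) ≠ 0 := by
    simpa using norm_ne_zero_iff.mpr hw
  rw [smul_smul, mul_inv_cancel₀ hn, one_smul]

lemma norm_homPoly_eq {k d : ℕ}
    {F : EuclideanSpace ℂ (Fin (k + 1)) → EuclideanSpace ℂ (Fin (k + 1))}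
    (hF : IsHomPoly k d F) {w : EuclideanSpace ℂ (Fin (k + 1))} (hw : w ≠ 0) :
    ‖F w‖ = ‖w‖ ^ d * ‖F ((‖w‖⁻¹ : ℂ) • w)‖ := by
  conv_lhs => rw [← smul_unit_eq hw, homPoly_smul hF]
  rw [norm_smul, norm_pow, Complex.norm_real, Real.norm_eq_abs, abs_of_nonneg (norm_nonneg w)]

lemma dist_homPoly_eq {k d : ℕ}
    {F₁ F₂ : EuclideanSpace ℂ (Fin (k + 1)) → EuclideanSpace ℂ (Fin (k + 1))}
    (h₁ : IsHomPoly k d F₁) (h₂ : IsHomPoly k d F₂)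
    {w : EuclideanSpace ℂ (Fin (k + 1))} (hw : w ≠ 0) :
    dist (F₁ w) (F₂ w)
      = ‖w‖ ^ d * dist (F₁ ((‖w‖⁻¹ : ℂ) • w)) (F₂ ((‖w‖⁻¹ : ℂ) • w)) := by
  conv_lhs => rw [← smul_unit_eq hw, homPoly_smul h₁, homPoly_smul h₂]
  rw [dist_eq_norm, ← smul_sub, norm_smul, ← dist_eq_norm, norm_pow, Complex.norm_real,
    Real.norm_eq_abs, abs_of_nonneg (norm_nonneg w)]

lemma iterate_ne_zero {k : ℕ}
    {F : EuclideanSpace ℂ (Fin (k + 1)) → EuclideanSpace ℂ (Fin (k + 1))}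
    (hN : IsNondeg k F) {z : EuclideanSpace ℂ (Fin (k + 1))} (hz : z ≠ 0) (n : ℕ) :
    F^[n] z ≠ 0 := by
  induction n with
  | zero => simpa
  | succ n ih =>
    rw [Function.iterate_succ_apply']
    exact fun h => ih (hN _ h)

lemma apply_conv {k d : ℕ} (hd : 1 ≤ d)
    {F : ℕ → EuclideanSpace ℂ (Fin (k + 1)) → EuclideanSpace ℂ (Fin (k + 1))}
    {F₀ : EuclideanSpace ℂ (Fin (k + 1)) → EuclideanSpace ℂ (Fin (k + 1))}
    (hFm : ∀ m, IsHomPoly k d (F m)) (hH₀ : IsHomPoly k d F₀)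
    (hconv : TendstoUniformlyOn (fun m z => F m z) F₀ atTop
      (Metric.sphere (0 : EuclideanSpace ℂ (Fin (k + 1))) 1))
    {w : ℕ → EuclideanSpace ℂ (Fin (k + 1))} {w₀ : EuclideanSpace ℂ (Fin (k + 1))}
    (hw : Tendsto w atTop (nhds w₀)) :
    Tendsto (fun m => F m (w m)) atTop (nhds (F₀ w₀)) := by
  rw [Metric.tendsto_nhds]
  intro ε hε
  set R : ℝ := ‖w₀‖ + 1 with hR
  have hRpos : 0 < R := by positivity
  have hRd : 0 < R ^ d := by positivity
  have h1 : ∀ᶠ m in atTop, ‖w m‖ ≤ R := by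
    have := (hw.norm.eventually (eventually_le_nhds (by simp [hR] : ‖w₀‖ < R)))
    exact this
  have h2 : ∀ᶠ m in atTop, dist (F₀ (w m)) (F₀ w₀) < ε / 2 :=
    (((homPoly_continuous hH₀).continuousAt.tendsto.comp hw).eventually
      (Metric.ball_mem_nhds _ (by positivity)))
  have h3 : ∀ᶠ m in atTop, ∀ x ∈ Metric.sphere (0 : EuclideanSpace ℂ (Fin (k + 1))) 1,
      dist (F₀ x) (F m x) < (ε / 2) / R ^ d :=
    Metric.tendstoUniformlyOn_iff.mp hconv _ (by positivity)
  filter_upwards [h1, h2, h3] with m hm1 hm2 hm3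
  have key : dist (F m (w m)) (F₀ (w m)) < ε / 2 := by
    rcases eq_or_ne (w m) 0 with h | h
    · rw [h, homPoly_zero hd (hFm m), homPoly_zero hd hH₀]
      simpa using half_pos hε
    · rw [dist_homPoly_eq (hFm m) hH₀ h]
      have hs := hm3 _ (unit_mem_sphere h)
      rw [dist_comm] at hs
      calc ‖w m‖ ^ d * dist (F m ((‖w m‖⁻¹ : ℂ) • w m)) (F₀ ((‖w m‖⁻¹ : ℂ) • w m))
          ≤ R ^ d * dist (F m ((‖w m‖⁻¹ : ℂ) • w m)) (F₀ ((‖w m‖⁻¹ : ℂ) • w m)) := by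
            gcongr
        _ < R ^ d * ((ε / 2) / R ^ d) := by gcongr
        _ = ε / 2 := by field_simp
  calc dist (F m (w m)) (F₀ w₀) ≤ dist (F m (w m)) (F₀ (w m)) + dist (F₀ (w m)) (F₀ w₀) :=
        dist_triangle _ _ _
    _ < ε / 2 + ε / 2 := by gcongr
    _ = ε := by ring

lemma iter_conv {k d : ℕ} (hd : 1 ≤ d)
    {F : ℕ → EuclideanSpace ℂ (Fin (k + 1)) → EuclideanSpace ℂ (Fin (k + 1))}
    {F₀ : EuclideanSpace ℂ (Fin (k + 1)) → EuclideanSpace ℂ (Fin (k + 1))}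
    (hFm : ∀ m, IsHomPoly k d (F m)) (hH₀ : IsHomPoly k d F₀)
    (hconv : TendstoUniformlyOn (fun m z => F m z) F₀ atTop
      (Metric.sphere (0 : EuclideanSpace ℂ (Fin (k + 1))) 1))
    {z : ℕ → EuclideanSpace ℂ (Fin (k + 1))} {z₀ : EuclideanSpace ℂ (Fin (k + 1))}
    (hzconv : Tendsto z atTop (nhds z₀)) (n : ℕ) :
    Tendsto (fun m => (F m)^[n] (z m)) atTop (nhds (F₀^[n] z₀)) := by
  induction n with
  | zero => simpa
  | succ n ih =>
    simp only [Function.iterate_succ_apply']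
    exact apply_conv hd hFm hH₀ hconv ih

lemma green_dist_bound {k d : ℕ} (hd : 2 ≤ d)
    {F : EuclideanSpace ℂ (Fin (k + 1)) → EuclideanSpace ℂ (Fin (k + 1))}
    (hH : IsHomPoly k d F) (hN : IsNondeg k F)
    {G : EuclideanSpace ℂ (Fin (k + 1)) → ℝ} (hG : IsGreen k d F G)
    {c C : ℝ} (hc : 0 < c)
    (hsph : ∀ x ∈ Metric.sphere (0 : EuclideanSpace ℂ (Fin (k + 1))) 1,
      c ≤ ‖F x‖ ∧ ‖F x‖ ≤ C)
    {z : EuclideanSpace ℂ (Fin (k + 1))} (hz : z ≠ 0) (n : ℕ) :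
    dist (((d : ℝ) ^ n)⁻¹ * Real.log ‖F^[n] z‖) (G z)
      ≤ (max |Real.log c| |Real.log C| / d) * ((d : ℝ)⁻¹) ^ n / (1 - (d : ℝ)⁻¹) := by
  have hd1 : (1 : ℝ) < d := by exact_mod_cast by omega
  have hdpos : (0 : ℝ) < d := by linarith
  set M : ℝ := max |Real.log c| |Real.log C| with hM
  have hr : (d : ℝ)⁻¹ < 1 := inv_lt_one_of_one_lt₀ hd1
  refine dist_le_of_le_geometric_of_tendsto ((d : ℝ)⁻¹) (M / d) hr ?_ (hG z hz) n
  intro j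
  set w := F^[j] z with hwdef
  have hw : w ≠ 0 := iterate_ne_zero hN hz j
  have hwn : (0 : ℝ) < ‖w‖ := norm_pos_iff.mpr hw
  obtain ⟨hlo, hhi⟩ := hsph _ (unit_mem_sphere hw)
  set e : ℝ := Real.log ‖F ((‖w‖⁻¹ : ℂ) • w)‖ with he
  have heM : |e| ≤ M := by
    rcases le_or_gt 0 e with h | h
    · refine le_trans ?_ (le_max_right _ _)
      rw [abs_of_nonneg h]
      exact le_trans (Real.log_le_log (by linarith) hhi) (le_abs_self _)
    · refine le_trans ?_ (le_max_left _ _)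
      rw [abs_of_neg h]
      have : Real.log c ≤ e := Real.log_le_log hc hlo
      calc -e ≤ -Real.log c := by linarith
        _ ≤ |Real.log c| := neg_le_abs _
  have hne : ‖F ((‖w‖⁻¹ : ℂ) • w)‖ ≠ 0 := by intro h0; rw [h0] at hlo; linarith
  have hFw : Real.log ‖F w‖ = d * Real.log ‖w‖ + e := by
    rw [norm_homPoly_eq hH hw, Real.log_mul (by positivity) hne, Real.log_pow, he]
  have hstep : F^[j + 1] z = F w := by rw [hwdef, Function.iterate_succ_apply']
  rw [hstep, Real.dist_eq, hFw]
  have hdn : ((d : ℝ) ^ j) ≠ 0 := by positivity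
  have hEq : ((d : ℝ) ^ j)⁻¹ * Real.log ‖w‖
      - ((d : ℝ) ^ (j + 1))⁻¹ * (d * Real.log ‖w‖ + e)
      = -(((d : ℝ) ^ (j + 1))⁻¹ * e) := by
    rw [pow_succ]
    field_simp
    ring
  rw [hEq, abs_neg, abs_mul, abs_inv, abs_pow, abs_of_pos hdpos]
  calc ((d : ℝ) ^ (j + 1))⁻¹ * |e| ≤ ((d : ℝ) ^ (j + 1))⁻¹ * M := by
        gcongr
    _ = M / d * ((d : ℝ)⁻¹) ^ j := by
        rw [pow_succ, mul_inv, inv_pow]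
        ring

theorem stmt12 (k d : ℕ) (hk : 1 ≤ k) (hd : 2 ≤ d)
    (F : ℕ → EuclideanSpace ℂ (Fin (k + 1)) → EuclideanSpace ℂ (Fin (k + 1)))
    (F₀ : EuclideanSpace ℂ (Fin (k + 1)) → EuclideanSpace ℂ (Fin (k + 1)))
    (hF : ∀ m, IsHomPoly k d (F m) ∧ IsNondeg k (F m))
    (hF₀ : IsHomPoly k d F₀ ∧ IsNondeg k F₀)
    (hconv : TendstoUniformlyOn (fun m z => F m z) F₀ atTop
      (Metric.sphere (0 : EuclideanSpace ℂ (Fin (k + 1))) 1))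
    (G : ℕ → EuclideanSpace ℂ (Fin (k + 1)) → ℝ)
    (G₀ : EuclideanSpace ℂ (Fin (k + 1)) → ℝ)
    (hG : ∀ m, IsGreen k d (F m) (G m)) (hG₀ : IsGreen k d F₀ G₀)
    (z : ℕ → EuclideanSpace ℂ (Fin (k + 1))) (hz : ∀ m, z m ≠ 0)
    (z₀ : EuclideanSpace ℂ (Fin (k + 1))) (hz₀ : z₀ ≠ 0)
    (hzconv : Tendsto z atTop (nhds z₀)) :
    Tendsto (fun m => G m (z m)) atTop (nhds (G₀ z₀)) := by
  obtain ⟨hH₀, hN₀⟩ := hF₀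
  have hd1 : (1 : ℝ) < d := by exact_mod_cast by omega
  have hdpos : (0 : ℝ) < d := by linarith
  have hd1' : 1 ≤ d := by omega
  have hScpt : IsCompact (Metric.sphere (0 : EuclideanSpace ℂ (Fin (k + 1))) 1) :=
    isCompact_sphere 0 1
  have hSne : (Metric.sphere (0 : EuclideanSpace ℂ (Fin (k + 1))) 1).Nonempty :=
    NormedSpace.sphere_nonempty.mpr zero_le_one
  have hcont : ContinuousOn (fun x => ‖F₀ x‖)
      (Metric.sphere (0 : EuclideanSpace ℂ (Fin (k + 1))) 1) :=
    ((homPoly_continuous hH₀).norm).continuousOn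
  obtain ⟨xc, hxc, hxcmin'⟩ := hScpt.exists_isMinOn hSne hcont
  obtain ⟨xC, hxC, hxCmax'⟩ := hScpt.exists_isMaxOn hSne hcont
  have hxcmin : ∀ x ∈ Metric.sphere (0 : EuclideanSpace ℂ (Fin (k + 1))) 1,
      ‖F₀ xc‖ ≤ ‖F₀ x‖ := fun x hx => hxcmin' hx
  have hxCmax : ∀ x ∈ Metric.sphere (0 : EuclideanSpace ℂ (Fin (k + 1))) 1,
      ‖F₀ x‖ ≤ ‖F₀ xC‖ := fun x hx => hxCmax' hx
  have hc₀pos : 0 < ‖F₀ xc‖ := by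
    rw [norm_pos_iff]
    intro h0
    have hxcne : xc ≠ 0 := by
      intro h
      rw [h, mem_sphere_zero_iff_norm] at hxc
      simp at hxc
    exact hxcne (hN₀ _ h0)
  set c₀ : ℝ := ‖F₀ xc‖ with hc₀def
  set C₀ : ℝ := ‖F₀ xC‖ with hC₀def
  set c : ℝ := c₀ / 2 with hcdef
  set C : ℝ := C₀ + c₀ / 2 with hCdef
  have hcpos : 0 < c := by positivity
  have hsph₀ : ∀ x ∈ Metric.sphere (0 : EuclideanSpace ℂ (Fin (k + 1))) 1,
      c ≤ ‖F₀ x‖ ∧ ‖F₀ x‖ ≤ C := by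
    intro x hx
    have h1 := hxcmin x hx
    have h2 := hxCmax x hx
    exact ⟨by simp only [hcdef]; linarith, by simp only [hCdef]; linarith⟩
  have hBlim : Tendsto
      (fun n : ℕ => (max |Real.log c| |Real.log C| / d) * ((d : ℝ)⁻¹) ^ n / (1 - (d : ℝ)⁻¹))
      atTop (nhds 0) := by
    have h0 : Tendsto (fun n : ℕ => ((d : ℝ)⁻¹) ^ n) atTop (nhds 0) :=
      tendsto_pow_atTop_nhds_zero_of_lt_one (by positivity) (inv_lt_one_of_one_lt₀ hd1)
    have := (h0.const_mul (max |Real.log c| |Real.log C| / d)).div_const (1 - (d : ℝ)⁻¹)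
    simpa using this
  rw [Metric.tendsto_nhds]
  intro ε hε
  obtain ⟨n, hn⟩ : ∃ n,
      (max |Real.log c| |Real.log C| / d) * ((d : ℝ)⁻¹) ^ n / (1 - (d : ℝ)⁻¹) < ε / 4 :=
    (hBlim.eventually (gt_mem_nhds (by positivity : (0 : ℝ) < ε / 4))).exists
  have hiter := iter_conv hd1' (fun m => (hF m).1) hH₀ hconv hzconv n
  have hne0 : F₀^[n] z₀ ≠ 0 := iterate_ne_zero hN₀ hz₀ n
  have hmid : Tendsto (fun m => ((d : ℝ) ^ n)⁻¹ * Real.log ‖(F m)^[n] (z m)‖) atTop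
      (nhds (((d : ℝ) ^ n)⁻¹ * Real.log ‖F₀^[n] z₀‖)) :=
    Tendsto.const_mul _ ((hiter.norm).log (norm_ne_zero_iff.mpr hne0))
  have hmid' := Metric.tendsto_nhds.mp hmid (ε / 2) (by positivity)
  have hunif := Metric.tendstoUniformlyOn_iff.mp hconv (c₀ / 2) (by positivity)
  filter_upwards [hmid', hunif] with m hm1 hm2
  have hsphm : ∀ x ∈ Metric.sphere (0 : EuclideanSpace ℂ (Fin (k + 1))) 1,
      c ≤ ‖F m x‖ ∧ ‖F m x‖ ≤ C := by
    intro x hx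
    have h := hm2 x hx
    have h1 := hxcmin x hx
    have h2 := hxCmax x hx
    have h3 : |‖F m x‖ - ‖F₀ x‖| ≤ dist (F m x) (F₀ x) := by
      rw [dist_eq_norm]; exact abs_norm_sub_norm_le _ _
    rw [dist_comm] at h
    rw [abs_le] at h3
    constructor
    · simp only [hcdef]
      have := h3.1
      have hdd : dist (F m x) (F₀ x) < c₀ / 2 := h
      linarith
    · simp only [hCdef]
      have := h3.2
      have hdd : dist (F m x) (F₀ x) < c₀ / 2 := h
      linarith
  have b1 := green_dist_bound hd (hF m).1 (hF m).2 (hG m) hcpos hsphm (hz m) n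
  have b2 := green_dist_bound hd hH₀ hN₀ hG₀ hcpos hsph₀ hz₀ n
  calc dist (G m (z m)) (G₀ z₀)
      ≤ dist (G m (z m)) (((d : ℝ) ^ n)⁻¹ * Real.log ‖(F m)^[n] (z m)‖)
        + dist (((d : ℝ) ^ n)⁻¹ * Real.log ‖(F m)^[n] (z m)‖)
            (((d : ℝ) ^ n)⁻¹ * Real.log ‖F₀^[n] z₀‖)
        + dist (((d : ℝ) ^ n)⁻¹ * Real.log ‖F₀^[n] z₀‖) (G₀ z₀) := dist_triangle4 _ _ _ _
    _ < ε / 4 + ε / 2 + ε / 4 := by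
        rw [dist_comm (G m (z m))]
        have hb1 : dist (((d : ℝ) ^ n)⁻¹ * Real.log ‖(F m)^[n] (z m)‖) (G m (z m)) < ε / 4 :=
          lt_of_le_of_lt b1 hn
        have hb2 : dist (((d : ℝ) ^ n)⁻¹ * Real.log ‖F₀^[n] z₀‖) (G₀ z₀) < ε / 4 :=
          lt_of_le_of_lt b2 hn
        exact add_lt_add (add_lt_add hb1 hm1) hb2
    _ = ε := by ring
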